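/- arXiv:2508.16304 — 3 statements merged into one kernel-verified Lean document; each statement's English description precedes it below -/
import Mathlib

section
/- Let s be a macrostate for the partition Π_V and let s' = s − e(A,q)·(column q) + e(B,q)·(column q) be the macrostate obtained from s by decreasing the count of vertex-state A in cell V_q by one and increasing the count of vertex-state B in cell V_q by one, where A ≠ B (so a transition from s to s' corresponds to a vertex in V_q changing from vertex-state A to vertex-state B). Then the sum over all microstates S in the lumping cell of s and all microstates S' in the lumping cell of s' of Q_{S,S'} equals (∏_{p=1}^P C(N_p; s_p)) · s_{A,q} · { ζ_0^{A,B} + (1/N_q) · Σ_{r=1}^P ( (Σ_{v∈V_q} d^v_r) / (N_r − δ_{q,r}) ) · Σ_{m=1}^M ζ_m^{A,B} ( s_{m,r} − δ_{A,W_m} δ_{q,r} ) }, where δ is the Kronecker delta and, when N_q = 1, the r = q summand is interpreted as 0 (its numerator Σ_{v∈V_q} d^v_q is then 0 since G is simple). Equivalently, dividing by the cell cardinality ∏_p C(N_p; s_p), the lumped generator entry q_{ss'} = (1/|cell(s)|) Σ_{S∈cell(s)} Σ_{S'∈cell(s')} Q_{S,S'} equals s_{A,q}{ ζ_0^{A,B}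 + (1/N_q) Σ_r ((Σ_{v∈V_q} d^v_r)/(N_r − δ_{q,r})) [Σ_m ζ_m^{A,B}(s_{m,r} − δ_{A,W_m}δ_{q,r})] }. -/
open Finset

/-- The set of vertices in partition cell `p`. -/
def cellVerts {V : Type} [Fintype V] {P : ℕ} (part : V → Fin P) (p : Fin P) : Finset V :=
  Finset.univ.filter (fun v => part v = p)

/-- N_p, the number of vertices in partition cell `p`. -/
def Ncell {V : Type} [Fintype V] {P : ℕ} (part : V → Fin P) (p : Fin P) : ℕ :=
  (cellVerts part p).card

/-- d^v_p, the number of neighbours of `v` in partition cell `p`. -/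
def dOf {V : Type} [Fintype V] [DecidableEq V] {P : ℕ} (G : SimpleGraph V)
    [DecidableRel G.Adj] (part : V → Fin P) (v : V) (p : Fin P) : ℕ :=
  ((G.neighborFinset v).filter (fun u => part u = p)).card

/-- The lumping cell of a macrostate `s`: the microstates `S : V → Fin M` such that, for
every vertex-state `m` and cell `p`, the number of vertices `v ∈ V_p` with `S v = m` is
`s m p`. -/
def lumpCell {V : Type} [Fintype V] [DecidableEq V] {M P : ℕ} (part : V → Fin P)
    (s : Fin M → Fin P → ℕ) : Finset (V → Fin M) :=
  Finset.univ.filter (fun S => ∀ m p,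
    (Finset.univ.filter (fun v => part v = p ∧ S v = m)).card = s m p)

/-- Number of neighbours of `v` whose state under `S` is `m`. -/
def nbr {V : Type} [Fintype V] [DecidableEq V] {M : ℕ} (G : SimpleGraph V)
    [DecidableRel G.Adj] (S : V → Fin M) (v : V) (m : Fin M) : ℕ :=
  ((G.neighborFinset v).filter (fun u => S u = m)).card

/-- The affine transition rate R_{A,B}(n₁,…,n_M) = ζ₀^{A,B} + Σₘ ζₘ^{A,B} nₘ. -/
def rate {M : ℕ} (ζ0 : Fin M → Fin M → ℝ) (ζ : Fin M → Fin M → Fin M → ℝ)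
    (A B : Fin M) (nc : Fin M → ℕ) : ℝ :=
  ζ0 A B + ∑ m, ζ A B m * (nc m : ℝ)

/-- The infinitesimal generator `Q` of the single-vertex-transition Markov chain:
`Q S S'` is the affine rate `R_{S(v),S'(v)}` evaluated at the neighbourhood counts of the
unique differing vertex `v` when `S, S'` differ at exactly one vertex, and `0` otherwise. -/
def Qmat {V : Type} [Fintype V] [DecidableEq V] {M : ℕ} (G : SimpleGraph V)
    [DecidableRel G.Adj] (ζ0 : Fin M → Fin M → ℝ) (ζ : Fin M → Fin M → Fin M → ℝ)
    (S S' : V → Fin M) : ℝ :=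
  if (Finset.univ.filter (fun v => S v ≠ S' v)).card = 1 then
    ∑ v ∈ Finset.univ.filter (fun v => S v ≠ S' v),
      rate ζ0 ζ (S v) (S' v) (nbr G S v)
  else 0

/-!
Summing `Q` between the two cells, a microstate `S` of the cell of `s` reaches the cell of `s'`
exactly by flipping one vertex `v ∈ V_q` with `S v = A` to `B`, at rate
`ζ₀ + Σ_m ζ_m n_m(v)`. The constant part contributes `|cell s| s_{A,q} ζ₀`. For the linear part,
`Σ_S Σ_v n_m(v)` is a sum over adjacent pairs `v ∈ V_q`, `u ∈ V_r` of the number of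
`S` with `S v = A`, `S u = m`. Partition-preserving permutations of `V` act on the cell, so that
number depends only on `(q, r)`; summing it over all pairs `v ∈ V_q`, `u ∈ V_r \ {v}` gives it as
`|cell s| s_{A,q} (s_{m,r} - δ) / (N_q (N_r - δ_{q,r}))`.

Finally `|cell s| = ∏_p C(N_p; s_p)`: flipping one vertex from `a` to `b` matches pairs
(microstate, flippable vertex) on both sides, so `s_{a,p} |cell s| = s'_{b,p} |cell s'|`; the
multinomial product obeys the same relation, and such moves lead to the macrostate with every
vertex in state `0`, whose cell is a single microstate.
-/

theorem Equiv.apply_swap_apply_eq {α β : Type*} [DecidableEq α] {f : α → β} {a b : α}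
    (h : f a = f b) (x : α) : f (Equiv.swap a b x) = f x := by
  rw [Equiv.swap_apply_def]
  split_ifs with hxa hxb
  · rw [hxa, h]
  · rw [hxb, h]
  · rfl

theorem Equiv.exists_perm_fiberwise_apply_eq_apply_eq {α β : Type*} [DecidableEq α] {f : α → β}
    {v u v' u' : α} (hvu : v ≠ u) (hvu' : v' ≠ u') (hv : f v = f v') (hu : f u = f u') :
    ∃ π : Equiv.Perm α, (∀ x, f (π x) = f x) ∧ π v = v' ∧ π u = u' := by
  set σ := Equiv.swap v v'
  have hσu : f (σ u) = f u' := (Equiv.apply_swap_apply_eq hv u).trans hu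
  refine ⟨σ.trans (Equiv.swap (σ u) u'), fun x => ?_, ?_, ?_⟩
  · rw [Equiv.trans_apply, Equiv.apply_swap_apply_eq hσu]
    exact Equiv.apply_swap_apply_eq hv x
  · have hσv : σ v = v' := Equiv.swap_apply_left v v'
    have hσuv' : σ u ≠ v' := hσv ▸ σ.injective.ne hvu.symm
    simp only [Equiv.trans_apply, hσv]
    exact Equiv.swap_apply_of_ne_of_ne hσuv'.symm hvu'
  · exact Equiv.swap_apply_left _ _

theorem Finset.cast_card_erase_eq_sub_ite {α R : Type*} [DecidableEq α] [AddGroupWithOne R]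
    (s : Finset α) (a : α) : (#(s.erase a) : R) = #s - if a ∈ s then 1 else 0 := by
  split_ifs with ha
  · exact cast_card_erase_of_mem ha
  · rw [erase_eq_of_notMem ha, sub_zero]

theorem Nat.add_one_mul_multinomial_add_single {α : Type*} [DecidableEq α] {s : Finset α} {a : α}
    (ha : a ∈ s) (g : α → ℕ) :
    (g a + 1) * multinomial s (g + Pi.single a 1) = (∑ i ∈ s, g i + 1) * multinomial s g := by
  have hrest : ∀ i ∈ s.erase a, (g + Pi.single a 1 : α → ℕ) i = g i := fun i hi => by
    simp [ne_of_mem_erase hi]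
  rw [← insert_erase ha, multinomial_insert (notMem_erase a s), multinomial_insert (notMem_erase a s),
    sum_insert (notMem_erase a s), multinomial_congr hrest, sum_congr rfl hrest]
  simp only [Pi.add_apply, Pi.single_eq_same]
  have := Nat.add_one_mul_choose_eq (g a + ∑ i ∈ s.erase a, g i) (g a)
  rw [show g a + 1 + ∑ i ∈ s.erase a, g i = g a + ∑ i ∈ s.erase a, g i + 1 by ring]
  linear_combination (multinomial (s.erase a) g) * this.symm

def IsMove {M P : ℕ} (s s' : Fin M → Fin P → ℕ) (a b : Fin M) (q : Fin P) : Prop :=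
  ∀ m p, (s' m p : ℤ) = s m p - (if m = a ∧ p = q then 1 else 0) + (if m = b ∧ p = q then 1 else 0)

namespace IsMove

variable {M P : ℕ} {s s' : Fin M → Fin P → ℕ} {a b : Fin M} {q : Fin P}

theorem symm (h : IsMove s s' a b q) : IsMove s' s b a q := by
  intro m p
  linarith [h m p]

theorem one_le (h : IsMove s s' a b q) (hab : a ≠ b) : 1 ≤ s a q := by
  have := h a q
  simp only [and_self, if_true, hab, false_and, if_false] at this
  omega

theorem eq {s'' : Fin M → Fin P → ℕ} (h : IsMove s s' a b q) (h' : IsMove s s'' a b q) :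
    s' = s'' := by
  funext m p
  exact_mod_cast (h m p).trans (h' m p).symm

theorem unique {a' b' : Fin M} {q' : Fin P}
    (h : IsMove s s' a b q) (h' : IsMove s s' a' b' q') (hab : a ≠ b) (hab' : a' ≠ b') :
    a' = a ∧ b' = b ∧ q' = q := by
  have ha := (h a q).symm.trans (h' a q)
  have hb := (h b q).symm.trans (h' b q)
  simp only [and_self, if_true, hab, hab.symm, false_and, if_false] at ha hb
  split_ifs at ha hb <;> grind

theorem exists_of_one_le (ha : 1 ≤ s a q) (b : Fin M) : ∃ s', IsMove s s' a b q :=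
  ⟨fun m p => s m p - (if m = a ∧ p = q then 1 else 0) + (if m = b ∧ p = q then 1 else 0),
    fun m p => by split_ifs <;> grind⟩

theorem sum_eq (h : IsMove s s' a b q) (p : Fin P) : ∑ m, s' m p = ∑ m, s m p := by
  have : ∑ m, (s' m p : ℤ) = ∑ m, (s m p : ℤ) := by
    simp only [h _ p, sum_add_distrib, sum_sub_distrib, ite_and, sum_ite_eq', mem_univ, if_true]
    ring
  exact_mod_cast this

theorem sum_sum_erase_add_one (h : IsMove s s' a b q) (hab : a ≠ b) :
    ∑ p, ∑ m ∈ univ.erase b, s' m p + 1 = ∑ p, ∑ m ∈ univ.erase b, s m p := by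
  have : ∑ p, ∑ m ∈ univ.erase b, (s' m p : ℤ) + 1 = ∑ p, ∑ m ∈ univ.erase b, (s m p : ℤ) := by
    simp [h _ _, sum_add_distrib, sum_sub_distrib, ite_and, hab]
  exact_mod_cast this

theorem mul_prod_multinomial (h : IsMove s s' a b q) (hab : a ≠ b) :
    s a q * ∏ p, Nat.multinomial univ (fun m => s m p)
      = s' b q * ∏ p, Nat.multinomial univ (fun m => s' m p) := by
  have hsa := h.one_le hab
  set g : Fin M → ℕ := fun m => s m q - if m = a then 1 else 0
  have hcol : (fun m => s m q) = g + Pi.single a 1 := by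
    funext m
    have := h m q
    simp only [g, Pi.add_apply, Pi.single_apply]
    split_ifs at this ⊢ <;> grind
  have hcol' : (fun m => s' m q) = g + Pi.single b 1 := by
    funext m
    have := h m q
    simp only [g, Pi.add_apply, Pi.single_apply]
    split_ifs at this ⊢ <;> grind
  have hrest : ∀ p ∈ univ.erase q,
      Nat.multinomial univ (fun m => s' m p) = Nat.multinomial univ (fun m => s m p) := by
    intro p hp
    congr 1
    funext m
    have := h m p
    simp only [ne_of_mem_erase hp, and_false, if_false] at this
    omega
  rw [← mul_prod_erase univ _ (mem_univ q), ← mul_prod_erase univ _ (mem_univ q),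
    prod_congr rfl hrest, hcol, hcol', ← mul_assoc, ← mul_assoc,
    show s a q = g a + 1 by simpa using congrFun hcol a,
    show s' b q = g b + 1 by simpa using congrFun hcol' b,
    Nat.add_one_mul_multinomial_add_single (mem_univ a), Nat.add_one_mul_multinomial_add_single (mem_univ b)]

end IsMove

def macrostateOf {V : Type} [Fintype V] [DecidableEq V] {M P : ℕ} (part : V → Fin P)
    (S : V → Fin M) (m : Fin M) (p : Fin P) : ℕ :=
  #{v | part v = p ∧ S v = m}

theorem mem_cellVerts {V : Type} [Fintype V] {P : ℕ} {part : V → Fin P} {v : V} {p : Fin P} :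
    v ∈ cellVerts part p ↔ part v = p := by
  simp [cellVerts]

section Lumping

variable {V : Type} [Fintype V] [DecidableEq V] {M P : ℕ} {part : V → Fin P}

theorem cast_card_cellVerts_erase {q : Fin P} {v : V} (hv : v ∈ cellVerts part q) (r : Fin P) :
    (#((cellVerts part r).erase v) : ℝ) = Ncell part r - if q = r then 1 else 0 := by
  simp only [cast_card_erase_eq_sub_ite, mem_cellVerts, mem_cellVerts.mp hv, Ncell]

theorem mem_lumpCell_iff {s : Fin M → Fin P → ℕ} {S : V → Fin M} :
    S ∈ lumpCell part s ↔ macrostateOf part S = s := by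
  simp [lumpCell, macrostateOf, funext_iff]

theorem card_filter_cellVerts_eq {s : Fin M → Fin P → ℕ} {S : V → Fin M}
    (hS : S ∈ lumpCell part s) (m : Fin M) (p : Fin P) :
    #{v ∈ cellVerts part p | S v = m} = s m p := by
  rw [cellVerts, filter_filter, ← mem_lumpCell_iff.mp hS, macrostateOf]

theorem isMove_macrostateOf_update (S : V → Fin M) (v : V) (b : Fin M) :
    IsMove (macrostateOf part S) (macrostateOf part (Function.update S v b)) (S v) b (part v) := by
  intro m p
  simp only [macrostateOf, card_filter]
  rw [← add_sum_erase _ _ (mem_univ v), ← add_sum_erase _ _ (mem_univ v)]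
  have hrest : ∑ w ∈ univ.erase v, (if part w = p ∧ Function.update S v b w = m then 1 else 0)
      = ∑ w ∈ univ.erase v, (if part w = p ∧ S w = m then 1 else 0) :=
    sum_congr rfl fun w hw => by rw [Function.update_of_ne (ne_of_mem_erase hw)]
  rw [hrest, Function.update_self]
  push_cast
  split_ifs <;> grind

theorem comp_mem_lumpCell_iff {s : Fin M → Fin P → ℕ} {S : V → Fin M} {π : Equiv.Perm V}
    (hπ : ∀ v, part (π v) = part v) : S ∘ π ∈ lumpCell part s ↔ S ∈ lumpCell part s := by
  suffices macrostateOf part (S ∘ π) = macrostateOf part S by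
    rw [mem_lumpCell_iff, mem_lumpCell_iff, this]
  funext m p
  exact card_equiv π fun v => by simp [hπ v]

theorem update_mem_lumpCell_iff {s s' : Fin M → Fin P → ℕ} {A B : Fin M} {q : Fin P}
    (hs' : IsMove s s' A B q) (hAB : A ≠ B) {S : V → Fin M} (hS : S ∈ lumpCell part s)
    {v : V} {b : Fin M} (hb : b ≠ S v) :
    Function.update S v b ∈ lumpCell part s' ↔ S v = A ∧ b = B ∧ part v = q := by
  have hmove := isMove_macrostateOf_update (part := part) S v b
  rw [mem_lumpCell_iff.mp hS] at hmove
  rw [mem_lumpCell_iff]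
  constructor
  · rintro h
    exact hs'.unique (h ▸ hmove) hAB hb.symm
  · rintro ⟨rfl, rfl, rfl⟩
    exact hmove.eq hs'

variable (part) in
def stateVertexPairs (t : Fin M → Fin P → ℕ) (c : Fin M) (q : Fin P) :
    Finset (Σ _ : V → Fin M, V) :=
  (lumpCell part t).sigma fun S => {v ∈ cellVerts part q | S v = c}

theorem card_stateVertexPairs (t : Fin M → Fin P → ℕ) (c : Fin M) (q : Fin P) :
    #(stateVertexPairs part t c q) = t c q * #(lumpCell part t) := by
  rw [stateVertexPairs, card_sigma, sum_congr rfl fun S hS => card_filter_cellVerts_eq hS c q,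
    sum_const, smul_eq_mul, mul_comm]

theorem update_mem_stateVertexPairs {t t' : Fin M → Fin P → ℕ} {c d : Fin M} {q : Fin P}
    (h : IsMove t t' c d q) (hcd : c ≠ d) {x : Σ _ : V → Fin M, V}
    (hx : x ∈ stateVertexPairs part t c q) :
    ⟨Function.update x.1 x.2 d, x.2⟩ ∈ stateVertexPairs part t' d q := by
  simp only [stateVertexPairs, mem_sigma, mem_filter] at hx ⊢
  obtain ⟨hS, hv, hvc⟩ := hx
  exact ⟨(update_mem_lumpCell_iff h hcd hS (hvc ▸ hcd.symm)).mpr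
    ⟨hvc, rfl, mem_cellVerts.mp hv⟩, hv, Function.update_self ..⟩

theorem IsMove.mul_card_lumpCell {s s' : Fin M → Fin P → ℕ} {a b : Fin M} {q : Fin P}
    (h : IsMove s s' a b q) (hab : a ≠ b) :
    s a q * #(lumpCell part s) = s' b q * #(lumpCell part s') := by
  rw [← card_stateVertexPairs, ← card_stateVertexPairs]
  refine card_nbij' (fun x => ⟨Function.update x.1 x.2 b, x.2⟩)
    (fun x => ⟨Function.update x.1 x.2 a, x.2⟩) (fun _ => update_mem_stateVertexPairs h hab)
    (fun _ => update_mem_stateVertexPairs h.symm hab.symm) ?_ ?_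
  all_goals
    rintro ⟨S, v⟩ hx
    simp only [stateVertexPairs, coe_sigma, Set.mem_sigma_iff, mem_coe, mem_filter] at hx
    simp [← hx.2.2]

theorem lumpCell_eq_singleton_of_concentrated [NeZero M] {s : Fin M → Fin P → ℕ}
    (hs0 : ∀ p, s 0 p = Ncell part p) (hzero : ∀ p, ∀ m ≠ 0, s m p = 0) :
    lumpCell part s = {fun _ => 0} := by
  ext S
  rw [mem_lumpCell_iff, mem_singleton]
  constructor
  · intro hS
    funext v
    by_contra hv
    have : 0 < macrostateOf part S (S v) (part v) := card_pos.mpr ⟨v, by simp⟩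
    rw [hS, hzero _ _ hv] at this
    exact this.false
  · rintro rfl
    funext m p
    by_cases hm : m = 0
    · subst hm
      simp [macrostateOf, hs0, Ncell, cellVerts]
    · simp [macrostateOf, hzero p m hm, Ne.symm hm]

theorem card_lumpCell [NeZero M] {s : Fin M → Fin P → ℕ} (hs : ∀ p, ∑ m, s m p = Ncell part p) :
    #(lumpCell part s) = ∏ p, Nat.multinomial univ (fun m => s m p) := by
  induction hn : ∑ p, ∑ m ∈ univ.erase 0, s m p generalizing s with
  | zero =>
    have hzero : ∀ p, ∀ m ≠ 0, s m p = 0 := fun p m hm =>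
      sum_eq_zero_iff.mp (sum_eq_zero_iff.mp hn p (mem_univ p)) m (mem_erase.mpr ⟨hm, mem_univ m⟩)
    have hs0 : ∀ p, s 0 p = Ncell part p := fun p => by
      rw [← hs p, ← add_sum_erase _ _ (mem_univ 0),
        sum_eq_zero fun m hm => hzero p m (ne_of_mem_erase hm), add_zero]
    have hcol : ∀ p, (fun m => s m p) = Pi.single 0 (Ncell part p) := fun p => by
      funext m
      by_cases hm : m = 0
      · subst hm
        simp [hs0]
      · simp [hm, hzero p m hm]
    rw [lumpCell_eq_singleton_of_concentrated hs0 hzero, card_singleton]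
    exact (prod_eq_one fun p _ => by rw [hcol, Nat.multinomial_single]).symm
  | succ n ih =>
    obtain ⟨q, -, hq⟩ := exists_ne_zero_of_sum_ne_zero (hn.trans_ne n.succ_ne_zero)
    obtain ⟨a, ha, haq⟩ := exists_ne_zero_of_sum_ne_zero hq
    have ha0 : a ≠ 0 := ne_of_mem_erase ha
    obtain ⟨s', hmove⟩ := IsMove.exists_of_one_le (Nat.one_le_iff_ne_zero.mpr haq) 0
    have hs' : ∀ p, ∑ m, s' m p = Ncell part p := fun p => (hmove.sum_eq p).trans (hs p)
    have hn' : ∑ p, ∑ m ∈ univ.erase 0, s' m p = n := by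
      have := hmove.sum_sum_erase_add_one ha0
      omega
    apply Nat.eq_of_mul_eq_mul_left (Nat.pos_of_ne_zero haq)
    rw [hmove.mul_card_lumpCell ha0, hmove.mul_prod_multinomial ha0, ih hs' hn']

theorem card_filter_lumpCell_eq_of_part_eq (s : Fin M → Fin P → ℕ) (a b : Fin M)
    {v u v' u' : V} (hvu : v ≠ u) (hvu' : v' ≠ u') (hv : part v = part v')
    (hu : part u = part u') :
    #{S ∈ lumpCell part s | S v = a ∧ S u = b} = #{S ∈ lumpCell part s | S v' = a ∧ S u' = b} := by
  obtain ⟨π, hπ, hπv, hπu⟩ :=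
    Equiv.exists_perm_fiberwise_apply_eq_apply_eq hvu' hvu hv.symm hu.symm
  refine card_nbij' (· ∘ π) (· ∘ π.symm) ?_ ?_ (fun S _ => by simp [Function.comp_assoc])
    (fun S _ => by simp [Function.comp_assoc])
  · intro S hS
    simp only [coe_filter, Set.mem_ofPred_eq, Function.comp_apply, hπv, hπu] at hS ⊢
    exact ⟨(comp_mem_lumpCell_iff hπ).mpr hS.1, hS.2⟩
  · intro S hS
    have hπ' : ∀ x, part (π.symm x) = part x := fun x => by
      rw [← hπ (π.symm x), Equiv.apply_symm_apply]
    simp only [coe_filter, Set.mem_ofPred_eq, Function.comp_apply, ← hπv, ← hπu,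
      Equiv.symm_apply_apply] at hS ⊢
    exact ⟨(comp_mem_lumpCell_iff hπ').mpr hS.1, hS.2⟩

theorem sum_pairs_of_mem_lumpCell {s : Fin M → Fin P → ℕ} {S : V → Fin M}
    (hS : S ∈ lumpCell part s) (a b : Fin M) (q r : Fin P) :
    ∑ v ∈ cellVerts part q, ∑ u ∈ (cellVerts part r).erase v,
        (if S v = a ∧ S u = b then (1 : ℝ) else 0)
      = s a q * (s b r - if a = b ∧ q = r then 1 else 0) := by
  have hinner : ∀ v ∈ {v ∈ cellVerts part q | S v = a},
      (#({u ∈ cellVerts part r | S u = b}.erase v) : ℝ) = s b r - if a = b ∧ q = r then 1 else 0 := by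
    intro v hv
    obtain ⟨hvq, hva⟩ := mem_filter.mp hv
    rw [cast_card_erase_eq_sub_ite, card_filter_cellVerts_eq hS]
    simp only [mem_filter, mem_cellVerts, mem_cellVerts.mp hvq, hva, and_comm]
  calc ∑ v ∈ cellVerts part q, ∑ u ∈ (cellVerts part r).erase v,
        (if S v = a ∧ S u = b then (1 : ℝ) else 0)
      = ∑ v ∈ {v ∈ cellVerts part q | S v = a},
          (#({u ∈ cellVerts part r | S u = b}.erase v) : ℝ) := by
        rw [sum_filter]
        refine sum_congr rfl fun v _ => ?_
        split_ifs with hva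
        · simp [hva, filter_erase]
        · simp [hva]
    _ = s a q * (s b r - if a = b ∧ q = r then 1 else 0) := by
        rw [sum_congr rfl hinner, sum_const, card_filter_cellVerts_eq hS, nsmul_eq_mul]

theorem cast_card_filter_lumpCell_pair (s : Fin M → Fin P → ℕ) (a b : Fin M) {q r : Fin P}
    {v u : V} (hv : v ∈ cellVerts part q) (hu : u ∈ cellVerts part r) (hvu : v ≠ u) :
    (#{S ∈ lumpCell part s | S v = a ∧ S u = b} : ℝ)
      = #(lumpCell part s) * s a q * (s b r - if a = b ∧ q = r then 1 else 0)
        / (Ncell part q * (Ncell part r - if q = r then 1 else 0)) := by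
  have hpair : ∀ v' ∈ cellVerts part q, ∀ u' ∈ (cellVerts part r).erase v',
      (#{S ∈ lumpCell part s | S v' = a ∧ S u' = b} : ℝ)
        = #{S ∈ lumpCell part s | S v = a ∧ S u = b} := fun v' hv' u' hu' => by
    rw [card_filter_lumpCell_eq_of_part_eq s a b (ne_of_mem_erase hu').symm hvu
      ((mem_cellVerts.mp hv').trans (mem_cellVerts.mp hv).symm)
      ((mem_cellVerts.mp (mem_of_mem_erase hu')).trans (mem_cellVerts.mp hu).symm)]
  have hcount : ∑ v' ∈ cellVerts part q, ∑ u' ∈ (cellVerts part r).erase v',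
      (#{S ∈ lumpCell part s | S v' = a ∧ S u' = b} : ℝ)
        = #(lumpCell part s) * s a q * (s b r - if a = b ∧ q = r then 1 else 0) := by
    simp only [natCast_card_filter]
    rw [sum_congr rfl fun v' _ => sum_comm, sum_comm,
      sum_congr rfl fun S hS => sum_pairs_of_mem_lumpCell hS a b q r, sum_const, nsmul_eq_mul,
      mul_assoc]
  have hden : (Ncell part r : ℝ) - (if q = r then 1 else 0) ≠ 0 := by
    rw [← cast_card_cellVerts_erase hv]
    exact_mod_cast (card_pos.mpr ⟨u, mem_erase.mpr ⟨hvu.symm, hu⟩⟩).ne'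
  have hNq : (Ncell part q : ℝ) ≠ 0 := by
    exact_mod_cast (card_pos.mpr ⟨v, hv⟩).ne'
  rw [eq_div_iff (mul_ne_zero hNq hden), ← hcount,
    sum_congr rfl fun v' hv' => by rw [sum_congr rfl (hpair v' hv'), sum_const, nsmul_eq_mul,
      cast_card_cellVerts_erase hv'],
    sum_const, nsmul_eq_mul, Ncell]
  ring

variable (G : SimpleGraph V) [DecidableRel G.Adj]

theorem sum_neighborFinset_comp_part (v : V) (c : Fin P → ℝ) :
    ∑ u ∈ G.neighborFinset v, c (part u) = ∑ r, dOf G part v r * c r := by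
  rw [← sum_fiberwise (G.neighborFinset v) part]
  refine sum_congr rfl fun r _ => ?_
  rw [sum_congr rfl fun u hu => by rw [(mem_filter.mp hu).2], sum_const, nsmul_eq_mul, dOf]

theorem sum_nbr_eq_sum_card_filter_lumpCell (s : Fin M → Fin P → ℕ) (a m : Fin M) (q : Fin P) :
    ∑ S ∈ lumpCell part s, ∑ v ∈ cellVerts part q with S v = a, (nbr G S v m : ℝ)
      = ∑ v ∈ cellVerts part q, ∑ u ∈ G.neighborFinset v,
          (#{S ∈ lumpCell part s | S v = a ∧ S u = m} : ℝ) := by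
  simp only [nbr, natCast_card_filter, sum_filter, ite_and]
  rw [sum_comm]
  refine sum_congr rfl fun v _ => ?_
  rw [sum_comm (s := G.neighborFinset v)]
  refine sum_congr rfl fun S _ => ?_
  split_ifs <;> simp

theorem sum_nbr_lumpCell (s : Fin M → Fin P → ℕ) (a m : Fin M) (q : Fin P) :
    ∑ S ∈ lumpCell part s, ∑ v ∈ cellVerts part q with S v = a, (nbr G S v m : ℝ)
      = ∑ r, (∑ v ∈ cellVerts part q, (dOf G part v r : ℝ)) *
          (#(lumpCell part s) * s a q * (s m r - if a = m ∧ q = r then 1 else 0)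
            / (Ncell part q * (Ncell part r - if q = r then 1 else 0))) := by
  rw [sum_nbr_eq_sum_card_filter_lumpCell]
  have hpair : ∀ v ∈ cellVerts part q, ∀ u ∈ G.neighborFinset v,
      (#{S ∈ lumpCell part s | S v = a ∧ S u = m} : ℝ)
        = #(lumpCell part s) * s a q * (s m (part u) - if a = m ∧ q = part u then 1 else 0)
            / (Ncell part q * (Ncell part (part u) - if q = part u then 1 else 0)) :=
    fun v hv u hu => cast_card_filter_lumpCell_pair s a m hv (mem_cellVerts.mpr rfl)
      (G.ne_of_adj ((G.mem_neighborFinset v u).mp hu))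
  let c : Fin P → ℝ := fun r => #(lumpCell part s) * s a q *
    (s m r - if a = m ∧ q = r then 1 else 0) / (Ncell part q * (Ncell part r - if q = r then 1 else 0))
  rw [sum_congr rfl fun v hv => (sum_congr rfl (hpair v hv)).trans
    (sum_neighborFinset_comp_part G v c), sum_comm]
  simp only [sum_mul]
  rfl

variable (ζ0 : Fin M → Fin M → ℝ) (ζ : Fin M → Fin M → Fin M → ℝ)

theorem filter_ne_update_eq_singleton {S : V → Fin M} {v : V} {b : Fin M} (hb : b ≠ S v) :
    ({w | S w ≠ Function.update S v b w} : Finset V) = {v} := by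
  ext w
  rcases eq_or_ne w v with rfl | hwv
  · simp [hb.symm]
  · simp [hwv]

theorem Qmat_update {S : V → Fin M} {v : V} {b : Fin M} (hb : b ≠ S v) :
    Qmat G ζ0 ζ S (Function.update S v b) = rate ζ0 ζ (S v) b (nbr G S v) := by
  rw [Qmat, filter_ne_update_eq_singleton hb, card_singleton, if_pos rfl, sum_singleton,
    Function.update_self]

theorem exists_eq_update_of_Qmat_ne_zero {S S' : V → Fin M} (h : Qmat G ζ0 ζ S S' ≠ 0) :
    ∃ v b, b ≠ S v ∧ S' = Function.update S v b := by
  have hcard : #{v | S v ≠ S' v} = 1 := by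
    by_contra hcard
    exact h (if_neg hcard)
  obtain ⟨v, hv⟩ := card_eq_one.mp hcard
  have hagree : ∀ w ≠ v, S' w = S w := fun w hw => by
    by_contra hne
    exact hw (mem_singleton.mp (hv ▸ mem_filter.mpr ⟨mem_univ w, Ne.symm hne⟩))
  refine ⟨v, S' v, fun h => ?_, ?_⟩
  · simpa [h] using hv.ge (mem_singleton_self v)
  · funext w
    rcases eq_or_ne w v with rfl | hwv
    · simp
    · simp [hwv, hagree w hwv]

theorem sum_Qmat_lumpCell {s s' : Fin M → Fin P → ℕ} {A B : Fin M} {q : Fin P}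
    (hs' : IsMove s s' A B q) (hAB : A ≠ B) {S : V → Fin M} (hS : S ∈ lumpCell part s) :
    ∑ S' ∈ lumpCell part s', Qmat G ζ0 ζ S S'
      = ∑ v ∈ cellVerts part q with S v = A, rate ζ0 ζ A B (nbr G S v) := by
  set T := {v ∈ cellVerts part q | S v = A}
  have hBT : ∀ v ∈ T, B ≠ S v := fun v hv => (mem_filter.mp hv).2 ▸ hAB.symm
  have hinj : Set.InjOn (fun v => Function.update S v B) T := by
    intro v hv w _ h
    by_contra hvw
    have := congrFun h v
    dsimp only at this
    rw [Function.update_self, Function.update_of_ne hvw] at this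
    exact hBT v hv this
  have hsub : T.image (fun v => Function.update S v B) ⊆ lumpCell part s' := by
    simp only [subset_iff, mem_image]
    rintro _ ⟨v, hv, rfl⟩
    obtain ⟨hvq, hvA⟩ := mem_filter.mp hv
    exact (update_mem_lumpCell_iff hs' hAB hS (hBT v hv)).mpr
      ⟨hvA, rfl, mem_cellVerts.mp hvq⟩
  have hzero : ∀ S' ∈ lumpCell part s', S' ∉ T.image (fun v => Function.update S v B) →
      Qmat G ζ0 ζ S S' = 0 := by
    intro S' hS' hnot
    by_contra h
    obtain ⟨v, b, hne, rfl⟩ := exists_eq_update_of_Qmat_ne_zero G ζ0 ζ h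
    obtain ⟨hvA, hB, hvq⟩ := (update_mem_lumpCell_iff hs' hAB hS hne).mp hS'
    exact hnot (mem_image.mpr ⟨v, mem_filter.mpr ⟨mem_cellVerts.mpr hvq, hvA⟩, by rw [hB]⟩)
  calc ∑ S' ∈ lumpCell part s', Qmat G ζ0 ζ S S'
      = ∑ S' ∈ T.image (fun v => Function.update S v B), Qmat G ζ0 ζ S S' :=
        (sum_subset hsub hzero).symm
    _ = ∑ v ∈ T, Qmat G ζ0 ζ S (Function.update S v B) := sum_image hinj
    _ = ∑ v ∈ T, rate ζ0 ζ A B (nbr G S v) := sum_congr rfl fun v hv => by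
        rw [Qmat_update G ζ0 ζ (hBT v hv), (mem_filter.mp hv).2]

end Lumping

theorem lumped_generator_entry_general
    (V : Type) [Fintype V] [DecidableEq V]
    (G : SimpleGraph V) [DecidableRel G.Adj]
    (M P : ℕ)
    (part : V → Fin P)
    (ζ0 : Fin M → Fin M → ℝ) (ζ : Fin M → Fin M → Fin M → ℝ)
    (s s' : Fin M → Fin P → ℕ)
    (hs : ∀ p, ∑ m, s m p = Ncell part p)
    (A B : Fin M) (q : Fin P) (hAB : A ≠ B)
    (hs' : ∀ m p, (s' m p : ℤ) =
      (s m p : ℤ) - (if m = A ∧ p = q then 1 else 0) + (if m = B ∧ p = q then 1 else 0)) :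
    ∑ S ∈ lumpCell part s, ∑ S' ∈ lumpCell part s', Qmat G ζ0 ζ S S'
      = (∏ p, (Nat.multinomial Finset.univ (fun m => s m p) : ℝ)) * (s A q : ℝ) *
        (ζ0 A B + (1 / (Ncell part q : ℝ)) *
          ∑ r, ((∑ v ∈ cellVerts part q, (dOf G part v r : ℝ)) /
              ((Ncell part r : ℝ) - (if q = r then 1 else 0))) *
            (∑ m, ζ A B m * ((s m r : ℝ) - (if A = m ∧ q = r then 1 else 0)))) := by
  have : NeZero M := NeZero.of_pos A.pos
  calc ∑ S ∈ lumpCell part s, ∑ S' ∈ lumpCell part s', Qmat G ζ0 ζ S S'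
      = ∑ S ∈ lumpCell part s, ∑ v ∈ cellVerts part q with S v = A,
          rate ζ0 ζ A B (nbr G S v) :=
        sum_congr rfl fun S hS => sum_Qmat_lumpCell G ζ0 ζ hs' hAB hS
    _ = #(lumpCell part s) * s A q * ζ0 A B + ∑ m, ζ A B m *
          ∑ S ∈ lumpCell part s, ∑ v ∈ cellVerts part q with S v = A, (nbr G S v m : ℝ) := by
        simp only [rate, sum_add_distrib, mul_sum]
        rw [sum_congr rfl fun S hS => by rw [sum_const, card_filter_cellVerts_eq hS, nsmul_eq_mul],
          sum_const, nsmul_eq_mul, sum_comm, sum_congr rfl fun m _ => sum_comm]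
        ring
    _ = _ := by
        simp only [sum_nbr_lumpCell, card_lumpCell hs, Nat.cast_prod, mul_add, mul_sum]
        rw [sum_comm]
        congr 1
        exact sum_congr rfl fun r _ => sum_congr rfl fun m _ => by rw [← div_div]; ring

/-- **Theorem (lumped generator entry, Theorem 5.5 of the paper).**
If `s'` is obtained from the macrostate `s` by moving one vertex of cell `V_q` from
vertex-state `A` to vertex-state `B` (`A ≠ B`), then the sum of the generator entries
between the lumping cells of `s` and `s'` equals
`(∏_p C(N_p; s_p)) ⬝ s_{A,q} ⬝ {ζ₀^{A,B} + (1/N_q) Σ_r ((Σ_{v∈V_q} d^v_r)/(N_r − δ_{q,r}))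
  [Σ_m ζ_m^{A,B}(s_{m,r} − δ_{A,W_m} δ_{q,r})]}`,
where, in Lean's real division, the `r = q` summand when `N_q = 1` is `0/0 ⬝ (⋯) = 0`,
matching the stated interpretation. -/
theorem lumped_generator_entry
    (V : Type) [Fintype V] [DecidableEq V]
    (G : SimpleGraph V) [DecidableRel G.Adj]
    (M P : ℕ) (hM : 1 ≤ M) (hP : 1 ≤ P)
    (part : V → Fin P) (hpart : ∀ p, ∃ v, part v = p)
    (ζ0 : Fin M → Fin M → ℝ) (ζ : Fin M → Fin M → Fin M → ℝ)
    (hζ0 : ∀ A B, 0 ≤ ζ0 A B) (hζ : ∀ A B m, 0 ≤ ζ A B m)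
    (s s' : Fin M → Fin P → ℕ)
    (hs : ∀ p, ∑ m, s m p = Ncell part p)
    (A B : Fin M) (q : Fin P) (hAB : A ≠ B)
    (hs' : ∀ m p, (s' m p : ℤ) =
      (s m p : ℤ) - (if m = A ∧ p = q then 1 else 0) + (if m = B ∧ p = q then 1 else 0)) :
    ∑ S ∈ lumpCell part s, ∑ S' ∈ lumpCell part s', Qmat G ζ0 ζ S S'
      = (∏ p, (Nat.multinomial Finset.univ (fun m => s m p) : ℝ)) * (s A q : ℝ) *
        (ζ0 A B + (1 / (Ncell part q : ℝ)) *
          ∑ r, ((∑ v ∈ cellVerts part q, (dOf G part v r : ℝ)) /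
              ((Ncell part r : ℝ) - (if q = r then 1 else 0))) *
            (∑ m, ζ A B m * ((s m r : ℝ) - (if A = m ∧ q = r then 1 else 0)))) :=
  lumped_generator_entry_general V G M P part ζ0 ζ s s' hs A B q hAB hs'
end

section
/- Let s be a macrostate for the partition Π_V, let v ∈ V, and let n be a neighbourhood count for v (a matrix n ∈ ℤ_{≥0}^{M×P} with Σ_m n_{m,p} = d^v_p for every p). Then n is realisable in the lumping cell of s — i.e., there exists a microstate S in the lumping cell of s such that for every m and p the number of neighbours of v in V_p with S-state W_m equals n_{m,p} — if and only if n_{m,p} ≤ s_{m,p} for all m and p. -/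
open Finset

/-!
Within each cell `V_p`, the neighbours of `v` and the remaining `N_p - d^v_p` vertices can be
given states independently, and on any finite set every vector of state counts summing to its
size is attained. So a microstate in the cell of `s` realising `n` exists as soon as the
non-neighbours can absorb the counts `s_{m,p} - n_{m,p}`, i.e. as soon as `n ≤ s`.
-/

theorem Fintype.exists_fun_card_fiber_eq {β ι : Type*} [Fintype β] [Fintype ι] [DecidableEq ι]
    (c : ι → ℕ) (hc : ∑ i, c i = Fintype.card β) :
    ∃ g : β → ι, ∀ i, #{b | g b = i} = c i := by
  let e : β ≃ Σ i, Fin (c i) := Fintype.equivOfCardEq (by simp [hc])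
  refine ⟨fun b => (e b).1, fun i => ?_⟩
  rw [← Fintype.card_subtype, ← Fintype.card_fin (c i)]
  exact Fintype.card_congr ((e.subtypeEquiv fun _ => Iff.rfl).trans (Equiv.sigmaSubtype i))

theorem Fintype.exists_fun_card_fiber_eq_fiberwise {α κ ι : Type*} [Fintype α] [DecidableEq κ]
    [Fintype ι] [DecidableEq ι] (key : α → κ) (c : κ → ι → ℕ)
    (hc : ∀ k, ∑ i, c k i = #{a | key a = k}) :
    ∃ f : α → ι, ∀ k i, #{a | key a = k ∧ f a = i} = c k i := by
  choose g hg using fun k => Fintype.exists_fun_card_fiber_eq (β := {a // key a = k}) (c k)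
    (by rw [hc, Fintype.card_subtype])
  refine ⟨fun a => g (key a) ⟨a, rfl⟩, fun k i => ?_⟩
  rw [← hg k i, ← Fintype.card_subtype, ← Fintype.card_subtype]
  exact Fintype.card_congr
    { toFun := fun a => ⟨⟨a.1, a.2.1⟩, by obtain ⟨a, rfl, h⟩ := a; exact h⟩
      invFun := fun b => ⟨b.1.1, b.1.2, by obtain ⟨⟨a, rfl⟩, h⟩ := b; exact h⟩
      left_inv := fun _ => rfl
      right_inv := fun _ => rfl }

section

variable {V : Type*} [Fintype V] (G : SimpleGraph V) [DecidableRel G.Adj]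

theorem SimpleGraph.filter_neighborFinset (v : V) (q : V → Prop) [DecidablePred q] :
    {u ∈ G.neighborFinset v | q u} = ({u | q u ∧ G.Adj v u} : Finset V) := by
  ext u
  simp [and_comm]

theorem SimpleGraph.card_filter_eq_card_neighborFinset_filter_add (v : V) (q : V → Prop)
    [DecidablePred q] :
    #{u | q u} = #{u ∈ G.neighborFinset v | q u} + #{u | q u ∧ ¬ G.Adj v u} := by
  rw [← card_filter_add_card_filter_not (s := {u | q u}) (G.Adj v), filter_filter, filter_filter,
    G.filter_neighborFinset]

end

section

variable {V : Type} [Fintype V] [DecidableEq V] {P : ℕ}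

theorem mem_lumpCell {M : ℕ} {part : V → Fin P} {s : Fin M → Fin P → ℕ} {S : V → Fin M} :
    S ∈ lumpCell part s ↔ ∀ m p, #{u | part u = p ∧ S u = m} = s m p := by
  simp [lumpCell]

variable (G : SimpleGraph V) [DecidableRel G.Adj] (part : V → Fin P) (v : V)

theorem Ncell_eq_dOf_add (p : Fin P) :
    Ncell part p = dOf G part v p + #{u | part u = p ∧ ¬ G.Adj v u} :=
  G.card_filter_eq_card_neighborFinset_filter_add v _

theorem exists_fun_card_neighbor_filter_eq {ι : Type*} [Fintype ι] [DecidableEq ι]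
    (a b : ι → Fin P → ℕ) (ha : ∀ p, ∑ i, a i p = dOf G part v p)
    (hb : ∀ p, ∑ i, b i p = #{u | part u = p ∧ ¬ G.Adj v u}) :
    ∃ S : V → ι, ∀ i p, #{u ∈ G.neighborFinset v | part u = p ∧ S u = i} = a i p ∧
      #{u | (part u = p ∧ S u = i) ∧ ¬ G.Adj v u} = b i p := by
  obtain ⟨S, hS⟩ := Fintype.exists_fun_card_fiber_eq_fiberwise
    (fun u => (part u, decide (G.Adj v u))) (fun k i => if k.2 then a i k.1 else b i k.1) <| by
      rintro ⟨p, _ | _⟩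
      · simp [hb]
      · simp [ha, dOf, G.filter_neighborFinset]
  refine ⟨S, fun i p => ⟨?_, ?_⟩⟩
  · rw [G.filter_neighborFinset]
    refine Eq.trans ?_ (hS (p, true) i)
    congr 1
    ext u
    simp only [mem_filter, mem_univ, true_and, Prod.mk.injEq, decide_eq_true_eq]
    tauto
  · refine Eq.trans ?_ (hS (p, false) i)
    congr 1
    ext u
    simp only [mem_filter, mem_univ, true_and, Prod.mk.injEq, decide_eq_false_iff_not]
    tauto

end

theorem realisable_iff_le_general
    (V : Type) [Fintype V] [DecidableEq V]
    (G : SimpleGraph V) [DecidableRel G.Adj]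
    (M P : ℕ)
    (part : V → Fin P)
    (s : Fin M → Fin P → ℕ)
    (hs : ∀ p, ∑ m, s m p = Ncell part p)
    (v : V) (n : Fin M → Fin P → ℕ)
    (hn : ∀ p, ∑ m, n m p = dOf G part v p) :
    (∃ S ∈ lumpCell part s, ∀ m p,
        ((G.neighborFinset v).filter (fun u => part u = p ∧ S u = m)).card = n m p)
      ↔ ∀ m p, n m p ≤ s m p := by
  constructor
  · rintro ⟨S, hS, hSn⟩ m p
    rw [← hSn m p, ← mem_lumpCell.1 hS m p]
    exact card_le_card (filter_subset_filter _ (subset_univ _))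
  · intro hle
    have hrest (p : Fin P) :
        ∑ m, (s m p - n m p) = #{u | part u = p ∧ ¬ G.Adj v u} := by
      rw [sum_tsub_distrib _ fun m _ => hle m p, hs, hn, Ncell_eq_dOf_add G part v p,
        Nat.add_sub_cancel_left]
    obtain ⟨S, hS⟩ := exists_fun_card_neighbor_filter_eq G part v n _ hn hrest
    refine ⟨S, mem_lumpCell.2 fun m p => ?_, fun m p => (hS m p).1⟩
    rw [G.card_filter_eq_card_neighborFinset_filter_add v, (hS m p).1, (hS m p).2]
    exact Nat.add_sub_cancel' (hle m p)

/-- **Lemma 5.2 of the paper.** A neighbourhood count `n` for a vertex `v`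
(with column sums `Σ_m n_{m,p} = d^v_p`) is realisable in the lumping cell of the
macrostate `s` — there exists a microstate `S` in the cell of `s` in which, for every `m`
and `p`, the number of neighbours of `v` in `V_p` with state `W_m` is `n_{m,p}` — if and
only if `n_{m,p} ≤ s_{m,p}` for all `m, p`. -/
theorem realisable_iff_le
    (V : Type) [Fintype V] [DecidableEq V]
    (G : SimpleGraph V) [DecidableRel G.Adj]
    (M P : ℕ) (hM : 1 ≤ M) (hP : 1 ≤ P)
    (part : V → Fin P) (hpart : ∀ p, ∃ v, part v = p)
    (s : Fin M → Fin P → ℕ)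
    (hs : ∀ p, ∑ m, s m p = Ncell part p)
    (v : V) (n : Fin M → Fin P → ℕ)
    (hn : ∀ p, ∑ m, n m p = dOf G part v p) :
    (∃ S ∈ lumpCell part s, ∀ m p,
        ((G.neighborFinset v).filter (fun u => part u = p ∧ S u = m)).card = n m p)
      ↔ ∀ m p, n m p ≤ s m p :=
  realisable_iff_le_general V G M P part s hs v n hn
end

section
/- Let s be a macrostate for the partition Π_V, let v ∈ V, and let n be a neighbourhood count for v (a matrix n ∈ ℤ_{≥0}^{M×P} with Σ_m n_{m,p} = d^v_p for every p). Then n is realisable in the lumping cell of s — i.e., there exists a microstate S in the lumping cell of s such that for every m and p the number of neighbours of v in V_p with S-state W_m equals n_{m,p} — if and only if ∏_{p=1}^P A(s_p, n_p) > 0, where s_p and n_p denote the p-th columns of s and n. -/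
open Finset

/-- Multinomial coefficient C(t; a) for integer arguments: t!/(∏ₘ aₘ!) when all aₘ ≥ 0
and Σₘ aₘ = t, and 0 otherwise. -/
def multinomZ {M : ℕ} (t : ℤ) (a : Fin M → ℤ) : ℕ :=
  if (∀ m, 0 ≤ a m) ∧ (∑ m, a m) = t then
    Nat.multinomial Finset.univ (fun m => (a m).toNat) else 0

/-- A(sp, np) = C(Σₘ npₘ; np) · C(Σₘ spₘ − Σₘ npₘ; sp − np). -/
def Afun {M : ℕ} (sp np : Fin M → ℤ) : ℕ :=
  multinomZ (∑ m, np m) np *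
    multinomZ ((∑ m, sp m) - ∑ m, np m) (fun m => sp m - np m)

/-!
Each cell `V_p` splits into the `d^v_p` neighbours of `v` and the `N_p - d^v_p` other vertices.
A microstate in the lumping cell of `s` realising `n` amounts to colouring these `2P` blocks
independently, the neighbours in `V_p` with colour counts `n_p` and the others with colour counts
`s_p - n_p`. Such colourings exist iff `n_p ≤ s_p` entrywise, which is exactly when both
multinomial coefficients in `A(s_p, n_p)` are nonzero.
-/

theorem Fintype.exists_card_fiber_eq {β ι : Type*} [Fintype β] [Fintype ι] [DecidableEq ι]
    (a : ι → ℕ) (h : ∑ i, a i = Fintype.card β) :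
    ∃ f : β → ι, ∀ i, #{x | f x = i} = a i := by
  let e : β ≃ Σ i, Fin (a i) := Fintype.equivOfCardEq (by simp [h])
  refine ⟨fun x => (e x).1, fun i => ?_⟩
  rw [← Fintype.card_subtype, ← Fintype.card_fin (a i)]
  exact Fintype.card_congr ((e.subtypeEquiv fun _ => Iff.rfl).trans (Equiv.sigmaSubtype i))

theorem Fintype.exists_card_fiber_eq_fiberwise {α κ ι : Type*} [Fintype α] [DecidableEq κ]
    [Fintype ι] [DecidableEq ι] (g : α → κ) (c : ι → κ → ℕ)
    (hc : ∀ k, ∑ i, c i k = #{x | g x = k}) :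
    ∃ f : α → ι, ∀ i k, #{x | g x = k ∧ f x = i} = c i k := by
  choose F hF using fun k =>
    exists_card_fiber_eq (β := {x // g x = k}) (c · k) (by rw [hc, Fintype.card_subtype])
  have hFg : ∀ k (y : {x // g x = k}), F (g y) ⟨y, rfl⟩ = F k y := by
    rintro k ⟨x, rfl⟩
    rfl
  refine ⟨fun x => F (g x) ⟨x, rfl⟩, fun i k => ?_⟩
  rw [← hF k i, ← Fintype.card_subtype, ← Fintype.card_subtype]
  exact Fintype.card_congr
    { toFun := fun x => ⟨⟨x, x.2.1⟩, (hFg k ⟨x, x.2.1⟩).symm.trans x.2.2⟩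
      invFun := fun y => ⟨y.1, y.1.2, (hFg k y.1).trans y.2⟩
      left_inv := fun _ => rfl
      right_inv := fun _ => rfl }

theorem Finset.card_filter_mem_add_card_filter_notMem {α : Type*} [Fintype α] [DecidableEq α]
    (p : α → Prop) [DecidablePred p] (B : Finset α) :
    #{x ∈ B | p x} + #{x | p x ∧ x ∉ B} = #{x | p x} := by
  rw [← card_filter_add_card_filter_not (s := {x | p x}) (· ∈ B), filter_filter, filter_filter]
  congr 2
  ext x
  simp [and_comm]

section ColourCounts

variable {α κ ι : Type*} [Fintype α] [DecidableEq α] [DecidableEq κ] [Fintype ι] [DecidableEq ι]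
  (part : α → κ) (B : Finset α) (s n : ι → κ → ℕ)

theorem exists_colour_counts_of_le (hs : ∀ k, ∑ i, s i k = #{x | part x = k})
    (hn : ∀ k, ∑ i, n i k = #{x ∈ B | part x = k}) (hle : ∀ i k, n i k ≤ s i k) :
    ∃ S : α → ι, (∀ i k, #{x | part x = k ∧ S x = i} = s i k) ∧
      ∀ i k, #{x ∈ B | part x = k ∧ S x = i} = n i k := by
  obtain ⟨S, hS⟩ := Fintype.exists_card_fiber_eq_fiberwise (fun x => (part x, decide (x ∈ B)))
    (fun i kb => if kb.2 then n i kb.1 else s i kb.1 - n i kb.1) (by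
      rintro ⟨k, _ | _⟩
      · simp only [Bool.false_eq_true, if_false]
        rw [sum_tsub_distrib _ fun i _ => hle i k, hs, hn,
          ← card_filter_mem_add_card_filter_notMem _ B]
        simp [Prod.ext_iff]
      · simp only [if_true]
        rw [hn]
        congr 1
        ext x
        simp [Prod.ext_iff, and_comm])
  have hSn : ∀ i k, #{x ∈ B | part x = k ∧ S x = i} = n i k := fun i k => by
    refine Eq.trans ?_ (hS i (k, true))
    congr 1
    ext x
    simp only [mem_filter, mem_univ, true_and, Prod.ext_iff, decide_eq_true_eq]
    tauto
  have hSs : ∀ i k, #{x | (part x = k ∧ S x = i) ∧ x ∉ B} = s i k - n i k := fun i k => by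
    refine Eq.trans ?_ (hS i (k, false))
    congr 1
    ext x
    simp only [mem_filter, mem_univ, true_and, Prod.ext_iff, decide_eq_false_iff_not]
    tauto
  refine ⟨S, fun i k => ?_, hSn⟩
  rw [← card_filter_mem_add_card_filter_notMem _ B, hSn, hSs, Nat.add_sub_cancel' (hle i k)]

theorem exists_colour_counts_iff_le (hs : ∀ k, ∑ i, s i k = #{x | part x = k})
    (hn : ∀ k, ∑ i, n i k = #{x ∈ B | part x = k}) :
    (∃ S : α → ι, (∀ i k, #{x | part x = k ∧ S x = i} = s i k) ∧
        ∀ i k, #{x ∈ B | part x = k ∧ S x = i} = n i k) ↔ ∀ i k, n i k ≤ s i k := by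
  refine ⟨?_, exists_colour_counts_of_le part B s n hs hn⟩
  rintro ⟨S, hSs, hSn⟩ i k
  rw [← hSs, ← hSn]
  exact card_le_card (filter_subset_filter _ (subset_univ B))

end ColourCounts

theorem multinomZ_pos_iff {M : ℕ} (t : ℤ) (a : Fin M → ℤ) :
    0 < multinomZ t a ↔ (∀ m, 0 ≤ a m) ∧ ∑ m, a m = t := by
  unfold multinomZ
  split_ifs with h
  · exact iff_of_true (Nat.multinomial_pos _ _) h
  · exact iff_of_false (lt_irrefl 0) h

theorem Afun_natCast_pos_iff {M : ℕ} (s n : Fin M → ℕ) :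
    0 < Afun (fun m => (s m : ℤ)) (fun m => (n m : ℤ)) ↔ ∀ m, n m ≤ s m := by
  rw [Afun, CanonicallyOrderedAdd.mul_pos, multinomZ_pos_iff, multinomZ_pos_iff]
  simp [sum_sub_distrib]

theorem realisable_iff_prod_pos_general
    (V : Type) [Fintype V] [DecidableEq V]
    (G : SimpleGraph V) [DecidableRel G.Adj]
    (M P : ℕ)
    (part : V → Fin P)
    (s : Fin M → Fin P → ℕ)
    (hs : ∀ p, ∑ m, s m p = Ncell part p)
    (v : V) (n : Fin M → Fin P → ℕ)
    (hn : ∀ p, ∑ m, n m p = dOf G part v p) :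
    (∃ S ∈ lumpCell part s, ∀ m p,
        ((G.neighborFinset v).filter (fun u => part u = p ∧ S u = m)).card = n m p)
      ↔ 0 < ∏ p, Afun (fun m => (s m p : ℤ)) (fun m => (n m p : ℤ)) := by
  have hprod : (0 < ∏ p, Afun (fun m => (s m p : ℤ)) (fun m => (n m p : ℤ))) ↔
      ∀ m p, n m p ≤ s m p := by
    simp only [CanonicallyOrderedAdd.prod_pos, mem_univ, true_implies, Afun_natCast_pos_iff]
    exact forall_comm
  rw [hprod, ← exists_colour_counts_iff_le part (G.neighborFinset v) s n hs hn]
  simp [lumpCell]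

/-- **Corollary 5.3 of the paper.** A neighbourhood count `n` for a vertex `v`
(with column sums `Σ_m n_{m,p} = d^v_p`) is realisable in the lumping cell of the
macrostate `s` if and only if `∏_{p=1}^P A(s_p, n_p) > 0`. -/
theorem realisable_iff_prod_pos
    (V : Type) [Fintype V] [DecidableEq V]
    (G : SimpleGraph V) [DecidableRel G.Adj]
    (M P : ℕ) (hM : 1 ≤ M) (hP : 1 ≤ P)
    (part : V → Fin P) (hpart : ∀ p, ∃ v, part v = p)
    (s : Fin M → Fin P → ℕ)
    (hs : ∀ p, ∑ m, s m p = Ncell part p)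
    (v : V) (n : Fin M → Fin P → ℕ)
    (hn : ∀ p, ∑ m, n m p = dOf G part v p) :
    (∃ S ∈ lumpCell part s, ∀ m p,
        ((G.neighborFinset v).filter (fun u => part u = p ∧ S u = m)).card = n m p)
      ↔ 0 < ∏ p, Afun (fun m => (s m p : ℤ)) (fun m => (n m p : ℤ)) :=
  realisable_iff_prod_pos_general V G M P part s hs v n hn
end
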